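/- Let R be an invertible N²×N² complex matrix, 𝒜 an associative unital ℂ-algebra, and C a fixed N×N complex matrix such that for every N×N matrix A with entries in 𝒜 the identities Tr_{R(2)}(R₁₂·A₁·R₁₂⁻¹) = (Tr_R A)·I_N and Tr_{R(2)}(R₁₂⁻¹·A₁·R₁₂) = (Tr_R A)·I_N hold, where A₁ = A⊗I_N. If an N×N matrix L with entries in 𝒜 satisfies the reflection equation R·L₁·R·L₁ = L₁·R·L₁·R, then for every integer k ≥ 1 the element Tr_R(Lᵏ) ∈ 𝒜 commutes with L, i.e. L·(Tr_R Lᵏ) = (Tr_R Lᵏ)·L as N×N matrices over 𝒜. -/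

import Mathlib

/-!
The reflection equation `R L₁ R L₁ = L₁ R L₁ R` says precisely that `L₁` commutes with
`R L₁ R`, hence so does every power `L₁ᵏ`; rearranged, `L₁ · (R L₁ᵏ R⁻¹) = R⁻¹ L₁ᵏ R · L₁`.
Taking the partial trace `Tr_{R(2)}`, which commutes with left and right multiplication by
matrices of the form `X₁`, the two conjugation identities for the weight matrix turn the left
side into `L · Tr_R(Lᵏ)` and the right side into `Tr_R(Lᵏ) · L`.
-/

open Matrix

/-- For an `N×N` matrix `X` with entries in `A`, `leg1 X = X ⊗ I_N` as an `N²×N²` matrix. -/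
def leg1 {N : ℕ} {A : Type*} [Semiring A] (X : Matrix (Fin N) (Fin N) A) :
    Matrix (Fin N × Fin N) (Fin N × Fin N) A :=
  Matrix.of fun a b => X a.1 b.1 * (if a.2 = b.2 then 1 else 0)

/-- Embedding of a complex matrix into matrices over a `ℂ`-algebra `A`. -/
def emb {n : Type*} {A : Type*} [Semiring A] [Algebra ℂ A] (R : Matrix n n ℂ) :
    Matrix n n A :=
  R.map (algebraMap ℂ A)

/-- The `R`-trace associated with the weight matrix `C`:
`Tr_R X = Σ_{i,j} C^i_j X^j_i`. -/
def trR {N : ℕ} {A : Type*} [Ring A] [Algebra ℂ A]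
    (C : Matrix (Fin N) (Fin N) ℂ) (X : Matrix (Fin N) (Fin N) A) : A :=
  ∑ i, ∑ j, C i j • X j i

/-- The partial `R`-trace over the second tensor factor:
`(Tr_{R(2)} M)^j_i = Σ_{a,b} C^a_b M^{(j,b)}_{(i,a)}`. -/
def trR2 {N : ℕ} {A : Type*} [Ring A] [Algebra ℂ A]
    (C : Matrix (Fin N) (Fin N) ℂ) (M : Matrix (Fin N × Fin N) (Fin N × Fin N) A) :
    Matrix (Fin N) (Fin N) A :=
  Matrix.of fun r s => ∑ a, ∑ b, C a b • M (r, b) (s, a)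

theorem Units.mul_conj_pow_of_reflection {M : Type*} [Monoid M] (u : Mˣ) {X : M}
    (h : u * X * u * X = X * u * X * u) (n : ℕ) :
    X * (u * X ^ n * ↑u⁻¹) = ↑u⁻¹ * X ^ n * u * X := by
  have hcomm : Commute (u * X * u) X := by
    rw [Commute, SemiconjBy, h]
    simp only [mul_assoc]
  calc X * (u * X ^ n * ↑u⁻¹) = ↑u⁻¹ * ((u * X * u) * X ^ n) * ↑u⁻¹ := by
        simp only [mul_assoc, Units.inv_mul_cancel_left]
    _ = ↑u⁻¹ * X ^ n * u * X := by
        rw [(hcomm.pow_right n).eq]; simp only [mul_assoc, Units.mul_inv, mul_one]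

section

variable {N : ℕ} {A : Type*}

theorem leg1_one [Semiring A] : leg1 (1 : Matrix (Fin N) (Fin N) A) = 1 := by
  ext a b
  by_cases h : a.1 = b.1 <;> simp [leg1, one_apply, Prod.ext_iff, h]

theorem leg1_mul [Semiring A] (X Y : Matrix (Fin N) (Fin N) A) :
    leg1 (X * Y) = leg1 X * leg1 Y := by
  ext a b
  simp [leg1, mul_apply, Fintype.sum_prod_type]

theorem leg1_pow [Semiring A] (X : Matrix (Fin N) (Fin N) A) (k : ℕ) :
    leg1 (X ^ k) = leg1 X ^ k := by
  induction k with
  | zero => exact leg1_one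
  | succ k ih => rw [pow_succ, pow_succ, leg1_mul, ih]

variable [Ring A] [Algebra ℂ A] (C : Matrix (Fin N) (Fin N) ℂ)

theorem trR2_mul_leg1 (M : Matrix (Fin N × Fin N) (Fin N × Fin N) A)
    (X : Matrix (Fin N) (Fin N) A) :
    trR2 C (M * leg1 X) = trR2 C M * X := by
  ext r s
  simp only [trR2, leg1, mul_apply, of_apply, Fintype.sum_prod_type, mul_ite, mul_one,
    mul_zero, Finset.sum_ite_eq', Finset.mem_univ, if_true, Finset.smul_sum, Finset.sum_mul,
    smul_mul_assoc]
  conv_rhs => rw [Finset.sum_comm]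
  exact Finset.sum_congr rfl fun _ _ => Finset.sum_comm

theorem trR2_leg1_mul (M : Matrix (Fin N × Fin N) (Fin N × Fin N) A)
    (X : Matrix (Fin N) (Fin N) A) :
    trR2 C (leg1 X * M) = X * trR2 C M := by
  ext r s
  simp only [trR2, leg1, mul_apply, of_apply, Fintype.sum_prod_type, ite_mul,
    zero_mul, mul_ite, mul_one, mul_zero, Finset.sum_ite_eq, Finset.mem_univ, if_true,
    Finset.smul_sum, Finset.mul_sum, mul_smul_comm]
  conv_rhs => rw [Finset.sum_comm]
  exact Finset.sum_congr rfl fun _ _ => Finset.sum_comm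

end

theorem emb_mul {n A : Type*} [Fintype n] [Semiring A] [Algebra ℂ A] (R S : Matrix n n ℂ) :
    (emb (R * S) : Matrix n n A) = emb R * emb S :=
  Matrix.map_mul

theorem emb_one {n A : Type*} [DecidableEq n] [Semiring A] [Algebra ℂ A] :
    (emb (1 : Matrix n n ℂ) : Matrix n n A) = 1 :=
  Matrix.map_one _ (map_zero _) (map_one _)

noncomputable def embUnit {n A : Type*} [Fintype n] [DecidableEq n] [Semiring A] [Algebra ℂ A]
    (R : Matrix n n ℂ) (hR : IsUnit R) : (Matrix n n A)ˣ where
  val := emb R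
  inv := emb R⁻¹
  val_inv := by rw [← emb_mul, mul_nonsing_inv R ((isUnit_iff_isUnit_det R).mp hR), emb_one]
  inv_val := by rw [← emb_mul, nonsing_inv_mul R ((isUnit_iff_isUnit_det R).mp hR), emb_one]

theorem power_sums_commute_general {N : ℕ} {A : Type*} [Ring A] [Algebra ℂ A]
    (R : Matrix (Fin N × Fin N) (Fin N × Fin N) ℂ)
    (hR : IsUnit R)
    (C : Matrix (Fin N) (Fin N) ℂ)
    (hOleg1 : ∀ X : Matrix (Fin N) (Fin N) A,
      trR2 C (emb R * leg1 X * emb R⁻¹) = trR C X • (1 : Matrix (Fin N) (Fin N) A))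
    (hOleg2 : ∀ X : Matrix (Fin N) (Fin N) A,
      trR2 C (emb R⁻¹ * leg1 X * emb R) = trR C X • (1 : Matrix (Fin N) (Fin N) A))
    (L : Matrix (Fin N) (Fin N) A)
    (hRE : emb R * leg1 L * emb R * leg1 L = leg1 L * emb R * leg1 L * emb R)
    (k : ℕ) :
    L * (trR C (L ^ k) • (1 : Matrix (Fin N) (Fin N) A)) =
      (trR C (L ^ k) • (1 : Matrix (Fin N) (Fin N) A)) * L := by
  have hRE_pow := (embUnit (A := A) R hR).mul_conj_pow_of_reflection hRE k
  calc L * (trR C (L ^ k) • (1 : Matrix (Fin N) (Fin N) A))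
      = trR2 C (leg1 L * (emb R * leg1 L ^ k * emb R⁻¹)) := by
        rw [trR2_leg1_mul, ← leg1_pow, hOleg1]
    _ = trR2 C (emb R⁻¹ * leg1 L ^ k * emb R * leg1 L) := congrArg (trR2 C) hRE_pow
    _ = (trR C (L ^ k) • (1 : Matrix (Fin N) (Fin N) A)) * L := by
        rw [trR2_mul_leg1, ← leg1_pow, hOleg2]

/-- if the weight matrix `C` satisfies the (Ogievetsky) identities
`Tr_{R(2)}(R₁₂ A₁ R₁₂⁻¹) = (Tr_R A)·I = Tr_{R(2)}(R₁₂⁻¹ A₁ R₁₂)`, then in any algebra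
whose generating matrix `L` satisfies the reflection equation the quantum power sums
`Tr_R Lᵏ` commute with `L`. -/
theorem power_sums_commute {N : ℕ} {A : Type*} [Ring A] [Algebra ℂ A]
    (R : Matrix (Fin N × Fin N) (Fin N × Fin N) ℂ)
    (hR : IsUnit R)
    (C : Matrix (Fin N) (Fin N) ℂ)
    (hOleg1 : ∀ X : Matrix (Fin N) (Fin N) A,
      trR2 C (emb R * leg1 X * emb R⁻¹) = trR C X • (1 : Matrix (Fin N) (Fin N) A))
    (hOleg2 : ∀ X : Matrix (Fin N) (Fin N) A,
      trR2 C (emb R⁻¹ * leg1 X * emb R) = trR C X • (1 : Matrix (Fin N) (Fin N) A))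
    (L : Matrix (Fin N) (Fin N) A)
    (hRE : emb R * leg1 L * emb R * leg1 L = leg1 L * emb R * leg1 L * emb R)
    (k : ℕ) (hk : 1 ≤ k) :
    L * (trR C (L ^ k) • (1 : Matrix (Fin N) (Fin N) A)) =
      (trR C (L ^ k) • (1 : Matrix (Fin N) (Fin N) A)) * L :=
  power_sums_commute_general R hR C hOleg1 hOleg2 L hRE k
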